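/- There exists a function R: (0,π) × ℝ → ℝ, independent of ε, such that for every ε with 0 ≤ ε < 1 and every (θ,φ) with 0 < θ < π, φ ∈ ℝ, the function h_ε(θ,φ) = sin θ · cos θ · cos φ · (1 - (3/196)·ε²·(4 - 7sin²θ)) satisfies Δ₁ h_ε = (-6 + (20/7)ε²)·h_ε + ε⁴·R(θ,φ). In other words, to first order in ε² the perturbed spherical harmonic with l = 2, m = 1 is an eigenfunction of Δ₁ with eigenvalue -6 + (20/7)ε². -/

import Mathlib

/-!
Write `Δ₁ = L₀ + ε² L₁` and `h_ε = (f₀ + ε² f₁)(θ) cos φ` with `f₀ = sin θ cos θ`, so that on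
functions `f(θ) cos φ` the operator is an ordinary differential operator in `θ`. At `ε = 0`,
`f₀ cos φ` is the spherical harmonic `Y₂¹`, with `L₀`-eigenvalue `-6`. The correction
`f₁ = -(3/196)(4 - 7 sin²θ) f₀` solves the first-order equation `(L₀ + 6) f₁ = (20/7 - L₁) f₀`,
so the `ε⁰` and `ε²` terms of `Δ₁ h_ε - (-6 + (20/7) ε²) h_ε` cancel and it equals
`ε⁴ ((L₁ - 20/7) f₁)(θ) cos φ`, which is independent of `ε`.
-/

open Real

/-- The truncated (first order in `ε²`) Finslerian Laplace operator, acting on a function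
`u : ℝ → ℝ → ℝ` of the angular variables `(θ, φ)`. -/
noncomputable def truncLaplacian (ε : ℝ) (u : ℝ → ℝ → ℝ) (θ φ : ℝ) : ℝ :=
  ((4 - 5 * ε ^ 2 * sin θ ^ 2) / (4 * sin θ ^ 2)) * deriv (deriv (u θ)) φ
  + (1 - 3 / 4 * ε ^ 2 * sin θ ^ 2) * deriv (deriv (fun t => u t φ)) θ
  + (cos θ / sin θ) * (1 + 3 / 4 * ε ^ 2 * sin θ ^ 2) * deriv (fun t => u t φ) θ

theorem deriv_deriv_const_mul_cos (a φ : ℝ) :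
    deriv (deriv fun ψ => a * cos ψ) φ = -(a * cos φ) := by
  have h : deriv (fun ψ => a * cos ψ) = fun ψ => -(a * sin ψ) :=
    funext fun ψ => by simp
  rw [h]
  simp

theorem truncLaplacian_mul_cos (ε : ℝ) {f f' : ℝ → ℝ} {f''θ θ : ℝ}
    (hf : ∀ t, HasDerivAt f (f' t) t) (hf' : HasDerivAt f' f''θ θ) (φ : ℝ) :
    truncLaplacian ε (fun t ψ => f t * cos ψ) θ φ =
      ((1 - 3 / 4 * ε ^ 2 * sin θ ^ 2) * f''θ
        + cos θ / sin θ * (1 + 3 / 4 * ε ^ 2 * sin θ ^ 2) * f' θ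
        - (4 - 5 * ε ^ 2 * sin θ ^ 2) / (4 * sin θ ^ 2) * f θ) * cos φ := by
  have hθ : deriv (fun t => f t * cos φ) = fun t => f' t * cos φ :=
    funext fun t => ((hf t).mul_const _).deriv
  rw [truncLaplacian, deriv_deriv_const_mul_cos, hθ, (hf'.mul_const _).deriv]
  ring

noncomputable def l2m1Profile (A t : ℝ) : ℝ :=
  sin t * cos t * (1 - A * (4 - 7 * sin t ^ 2))

noncomputable def l2m1ProfileDeriv (A t : ℝ) : ℝ :=
  (cos t ^ 2 - sin t ^ 2) * (1 - A * (4 - 7 * sin t ^ 2)) + 14 * A * sin t ^ 2 * cos t ^ 2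

noncomputable def l2m1ProfileDeriv2 (A t : ℝ) : ℝ :=
  -4 * sin t * cos t * (1 - A * (4 - 7 * sin t ^ 2))
    + 42 * A * sin t * cos t * (cos t ^ 2 - sin t ^ 2)

/-- The `ε⁴`-coefficient `(L₁ - 20/7) f₁` of the residual. -/
noncomputable def l2m1Remainder (t : ℝ) : ℝ :=
  sin t * cos t * (18 / 343 - 99 / 196 * sin t ^ 2 + 27 / 28 * sin t ^ 4)

theorem hasDerivAt_l2m1Profile (A t : ℝ) :
    HasDerivAt (l2m1Profile A) (l2m1ProfileDeriv A t) t := by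
  have h := ((hasDerivAt_sin t).mul (hasDerivAt_cos t)).mul
    ((((hasDerivAt_sin t).pow 2).const_mul 7).const_sub 4 |>.const_mul A |>.const_sub 1)
  refine h.congr_deriv ?_
  simp only [Pi.pow_apply, Pi.mul_apply, l2m1ProfileDeriv]
  ring

theorem hasDerivAt_l2m1ProfileDeriv (A t : ℝ) :
    HasDerivAt (l2m1ProfileDeriv A) (l2m1ProfileDeriv2 A t) t := by
  have hs := (hasDerivAt_sin t).pow 2
  have hc := (hasDerivAt_cos t).pow 2
  have h := ((hc.sub hs).mul ((hs.const_mul 7).const_sub 4 |>.const_mul A |>.const_sub 1)).add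
    ((hs.const_mul (14 * A)).mul hc)
  refine h.congr_deriv ?_
  simp only [Pi.pow_apply, Pi.sub_apply, l2m1ProfileDeriv2]
  ring

theorem l2m1Profile_ode (ε : ℝ) {θ : ℝ} (hθ : sin θ ≠ 0) :
    (1 - 3 / 4 * ε ^ 2 * sin θ ^ 2) * l2m1ProfileDeriv2 (3 / 196 * ε ^ 2) θ
        + cos θ / sin θ * (1 + 3 / 4 * ε ^ 2 * sin θ ^ 2) * l2m1ProfileDeriv (3 / 196 * ε ^ 2) θ
        - (4 - 5 * ε ^ 2 * sin θ ^ 2) / (4 * sin θ ^ 2) * l2m1Profile (3 / 196 * ε ^ 2) θ =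
      (-6 + 20 / 7 * ε ^ 2) * l2m1Profile (3 / 196 * ε ^ 2) θ + ε ^ 4 * l2m1Remainder θ := by
  rw [l2m1Profile, l2m1ProfileDeriv, l2m1ProfileDeriv2, l2m1Remainder]
  field_simp
  rw [cos_sq']
  ring

/-- To first order in `ε²`, the perturbed spherical harmonic with `l = 2`, `m = 1`,
`h_ε(θ,φ) = sin θ · cos θ · cos φ · (1 - (3/196)·ε²·(4 - 7sin²θ))`, is an eigenfunction of
`Δ₁` with eigenvalue `-6 + (20/7)ε²`: there is an `ε`-independent remainder `R(θ,φ)` with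
`Δ₁ h_ε = (-6 + (20/7)ε²)·h_ε + ε⁴·R(θ,φ)`. -/
theorem truncLaplacian_l2m1_eigen :
    ∃ R : ℝ → ℝ → ℝ, ∀ ε : ℝ, 0 ≤ ε → ε < 1 →
      ∀ θ φ : ℝ, 0 < θ → θ < Real.pi →
        truncLaplacian ε
            (fun θ' φ' => Real.sin θ' * Real.cos θ' * Real.cos φ' *
              (1 - 3 / 196 * ε ^ 2 * (4 - 7 * Real.sin θ' ^ 2)))
            θ φ =
          (-6 + 20 / 7 * ε ^ 2) *
            (Real.sin θ * Real.cos θ * Real.cos φ *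
              (1 - 3 / 196 * ε ^ 2 * (4 - 7 * Real.sin θ ^ 2)))
          + ε ^ 4 * R θ φ := by
  refine ⟨fun θ φ => l2m1Remainder θ * cos φ, fun ε _ _ θ φ hθ0 hθπ => ?_⟩
  have h_sep : (fun θ' φ' => sin θ' * cos θ' * cos φ' *
      (1 - 3 / 196 * ε ^ 2 * (4 - 7 * sin θ' ^ 2))) =
      fun t ψ => l2m1Profile (3 / 196 * ε ^ 2) t * cos ψ := by
    funext t ψ
    rw [l2m1Profile, mul_right_comm]
  rw [h_sep, truncLaplacian_mul_cos ε (hasDerivAt_l2m1Profile _) (hasDerivAt_l2m1ProfileDeriv _ θ),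
    l2m1Profile_ode ε (sin_pos_of_pos_of_lt_pi hθ0 hθπ).ne', l2m1Profile]
  ring
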